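/- arXiv:1104.3500 — 2 statements merged into one kernel-verified Lean document; each statement's English description precedes it below -/
import Mathlib

section
/- Every right-infinite binary 7/3-power-free word x can be written as x = p μ(y) where p ∈ {ε, 0, 00, 1, 11}, y is a right-infinite binary 7/3-power-free word, and μ is the Thue–Morse morphism; moreover this factorization is unique. -/
/-- Thue–Morse morphism on finite binary words: 0 ↦ 01, 1 ↦ 10 (0 = false, 1 = true). -/
def mu (w : List Bool) : List Bool := w.flatMap (fun b => [b, !b])

/-- Thue–Morse morphism on right-infinite binary words. -/
def muI (x : ℕ → Bool) : ℕ → Bool := fun n => if n % 2 = 0 then x (n / 2) else !(x (n / 2))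

/-- Prepend a finite word to an infinite word. -/
def appendInf (u : List Bool) (x : ℕ → Bool) : ℕ → Bool :=
  fun n => if h : n < u.length then u.get ⟨n, h⟩ else x (n - u.length)

/-- `w` is a prefix of the infinite word `x`. -/
def InfPrefix (w : List Bool) (x : ℕ → Bool) : Prop :=
  ∀ i (h : i < w.length), w.get ⟨i, h⟩ = x i

/-- The finite word `w` is `p`-periodic. -/
def ListPeriodic (w : List Bool) (p : ℕ) : Prop :=
  ∀ i, i + p < w.length → w.getD i false = w.getD (i + p) false

/-- `w` occurs as a factor of the infinite word `x`. -/
def IsFactor (x : ℕ → Bool) (w : List Bool) : Prop :=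
  ∃ i, ∀ k (h : k < w.length), w.get ⟨k, h⟩ = x (i + k)

/-- `w` has exponent ≥ β : it has a period `p ≥ 1` with `|w| ≥ β·p`. -/
def HasExpGE (w : List Bool) (β : ℚ) : Prop :=
  ∃ p, 1 ≤ p ∧ ListPeriodic w p ∧ β * p ≤ (w.length : ℚ)

/-- `w` has exponent > β. -/
def HasExpGT (w : List Bool) (β : ℚ) : Prop :=
  ∃ p, 1 ≤ p ∧ ListPeriodic w p ∧ β * p < (w.length : ℚ)

/-- The infinite word `x` is β-power-free: no factor has exponent ≥ β. -/
def FreeI (x : ℕ → Bool) (β : ℚ) : Prop := ∀ w, IsFactor x w → ¬ HasExpGE w β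

/-- The infinite word `x` is β⁺-power-free: no factor has exponent > β. -/
def FreePlusI (x : ℕ → Bool) (β : ℚ) : Prop := ∀ w, IsFactor x w → ¬ HasExpGT w β

/-- The finite word `x` is β-power-free. -/
def FreeL (x : List Bool) (β : ℚ) : Prop := ∀ w, w <:+: x → ¬ HasExpGE w β

/-- The finite word `x` is β⁺-power-free. -/
def FreeLPlus (x : List Bool) (β : ℚ) : Prop := ∀ w, w <:+: x → ¬ HasExpGT w β

/-- The infinite word `x` is 7/3-power-free. -/
def Free73 (x : ℕ → Bool) : Prop := FreeI x (7/3)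

/-- The prefix of length `n` of the infinite word `x` is `p`-periodic. -/
def PrefPeriodic (x : ℕ → Bool) (p n : ℕ) : Prop := ∀ i, i + p < n → x i = x (i + p)

/-- The set {ε, 0, 00, 1, 11}. -/
def P5 : Set (List Bool) :=
  {[], [false], [false, false], [true], [true, true]}

/-- Thue–Morse word: parity of the number of ones in base 2. -/
def tmWord (n : ℕ) : Bool := (Nat.digits 2 n).sum % 2 == 1

/-- Lexicographic order (0 < 1) on infinite binary words. -/
def LexLE (u v : ℕ → Bool) : Prop :=
  u = v ∨ ∃ n, (∀ k < n, u k = v k) ∧ u n = false ∧ v n = true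

/-- The 2-kernel of an infinite word. -/
def Kernel2 (x : ℕ → Bool) : Set (ℕ → Bool) :=
  {y | ∃ i j, j < 2 ^ i ∧ y = fun n => x (2 ^ i * n + j)}

/-- An infinite word is 2-automatic iff its 2-kernel is finite. -/
def TwoAutomatic (x : ℕ → Bool) : Prop := (Kernel2 x).Finite
section Aux

variable (x : ℕ → Bool)

private lemma bool_ne_iff {a b : Bool} (h : a ≠ b) : b = !a := by
  revert h; cases a <;> cases b <;> decide

private lemma bool_trans2 {a b c : Bool} (h1 : a ≠ b) (h2 : b ≠ c) : a = c := by
  revert h1 h2; cases a <;> cases b <;> cases c <;> decide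

/-- window of x of length l starting at i -/
def win (i l : ℕ) : List Bool := (List.range l).map fun k => x (i + k)

lemma win_length (i l : ℕ) : (win x i l).length = l := by simp [win]

lemma win_get (i l k : ℕ) (h : k < (win x i l).length) :
    (win x i l).get ⟨k, h⟩ = x (i + k) := by
  simp [win]

lemma win_getD (i l k : ℕ) (h : k < l) : (win x i l).getD k false = x (i + k) := by
  rw [List.getD_eq_getElem _ _ (by simpa [win_length] using h)]
  simp [win]

lemma win_factor (i l : ℕ) : IsFactor x (win x i l) :=
  ⟨i, fun k h => win_get x i l k h⟩

lemma no_pow (hx : Free73 x) (i p l : ℕ) (hp : 1 ≤ p) (hl : (7/3 : ℚ) * p ≤ l)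
    (hper : ∀ k, k + p < l → x (i + k) = x (i + k + p)) : False := by
  refine hx (win x i l) (win_factor x i l) ⟨p, hp, ?_, ?_⟩
  · intro k hk
    rw [win_length] at hk
    rw [win_getD x i l k (by omega), win_getD x i l (k + p) hk]
    rw [← Nat.add_assoc]
    exact hper k hk
  · rw [win_length]
    exact hl

/-- same pairs at positions ≥ 1 have equal parity -/
lemma parity_lemma (hx : Free73 x) :
    ∀ d i j, 1 ≤ i → i < j → j = i + d → d % 2 = 1 →
      x i = x (i + 1) → x j = x (j + 1) → False := by
  intro d
  induction d using Nat.strong_induction_on with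
  | _ d IH =>
    intro i j hi hij hjd hodd hpi hpj
    by_cases hk : ∃ k, i < k ∧ k < j ∧ x k = x (k + 1)
    · obtain ⟨k, hk1, hk2, hk3⟩ := hk
      by_cases h2 : (k - i) % 2 = 1
      · exact IH (k - i) (by omega) i k hi hk1 (by omega) h2 hpi hk3
      · exact IH (j - k) (by omega) k j (by omega) hk2 (by omega) (by omega) hk3 hpj
    · push_neg at hk
      subst hjd
      -- no same pair strictly between i and j
      have hne : ∀ m, i < m → m < i + d → x m ≠ x (m + 1) := hk
      rcases Nat.lt_or_ge d 5 with hd5 | hd5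
      · rcases Nat.eq_or_lt_of_le (Nat.one_le_iff_ne_zero.mpr (by omega : d ≠ 0)) with h1 | h1
        · -- d = 1 : aaa at i
          have hd1 : d = 1 := h1.symm
          rw [hd1] at hpj
          refine no_pow x hx i 1 3 le_rfl (by norm_num) ?_
          intro k hk3
          have hub : k < 2 := by omega
          interval_cases k
          · simpa using hpi
          · exact hpj
        · -- d = 3
          have hd3 : d = 3 := by omega
          rw [hd3] at hpj
          have e1 : x (i + 1) ≠ x (i + 2) := hne (i + 1) (by omega) (by omega)
          have e2 : x (i + 2) ≠ x (i + 3) := hne (i + 2) (by omega) (by omega)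
          have ha2 : x (i + 2) = !(x i) := by rw [← hpi] at e1; exact bool_ne_iff e1
          have ha3 : x (i + 3) = x i := by
            have h := bool_ne_iff e2
            rw [ha2] at h; simpa using h
          have ha4 : x (i + 4) = x i := by
            have h : x (i + 3 + 1) = x (i + 3) := hpj.symm
            rw [ha3] at h
            have e : i + 3 + 1 = i + 4 := by omega
            rwa [e] at h
          by_cases hL : x (i - 1) = x i
          · -- aaa at i-1
            refine no_pow x hx (i - 1) 1 3 le_rfl (by norm_num) ?_
            intro k hk3
            have hub : k < 2 := by omega
            interval_cases k
            · have e : i - 1 + 0 = i - 1 := by omega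
              have e' : i - 1 + 1 = i := by omega
              rw [e, e', hL]
            · have e : i - 1 + 1 = i := by omega
              rw [e]; exact hpi
          · by_cases hR : x (i + 5) = x i
            · -- aaa at i+3
              refine no_pow x hx (i + 3) 1 3 le_rfl (by norm_num) ?_
              intro k hk3
              have hub : k < 2 := by omega
              interval_cases k
              · have e : i + 3 + 0 = i + 3 := by omega
                rw [e]; exact hpj
              · have e : i + 3 + 1 = i + 4 := by omega
                have e' : i + 4 + 1 = i + 5 := by omega
                rw [e, e', ha4, hR]
            · -- baabaab at i-1, period 3 length 7
              have hLb : x (i - 1) = !(x i) := bool_ne_iff (fun h => hL h.symm)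
              have hRb : x (i + 5) = !(x i) := bool_ne_iff (fun h => hR h.symm)
              refine no_pow x hx (i - 1) 3 7 (by norm_num) (by norm_num) ?_
              intro k hk7
              have hub : k < 4 := by omega
              interval_cases k
              · have e : i - 1 + 0 = i - 1 := by omega
                have e' : i - 1 + 3 = i + 2 := by omega
                rw [e, e', hLb, ha2]
              · have e : i - 1 + 1 = i := by omega
                have e' : i + 3 = i + 3 := rfl
                rw [e, ha3]
              · have e : i - 1 + 2 = i + 1 := by omega
                have e' : i + 1 + 3 = i + 4 := by omega
                rw [e, e', ha4, ← hpi]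
              · have e : i - 1 + 3 = i + 2 := by omega
                have e' : i + 2 + 3 = i + 5 := by omega
                rw [e, e', ha2, hRb]
      · -- d ≥ 5 : ababa at i+1
        have h1 : x (i + 1) ≠ x (i + 2) := hne _ (by omega) (by omega)
        have h2 : x (i + 2) ≠ x (i + 3) := hne _ (by omega) (by omega)
        have h3 : x (i + 3) ≠ x (i + 4) := hne _ (by omega) (by omega)
        have h4 : x (i + 4) ≠ x (i + 5) := hne _ (by omega) (by omega)
        refine no_pow x hx (i + 1) 2 5 (by norm_num) (by norm_num) ?_
        intro k hk5
        have hub : k < 3 := by omega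
        interval_cases k
        · have e : i + 1 + 0 = i + 1 := by omega
          have e' : i + 1 + 2 = i + 3 := by omega
          rw [e, e']; exact bool_trans2 h1 h2
        · have e : i + 1 + 1 = i + 2 := by omega
          have e' : i + 2 + 2 = i + 4 := by omega
          rw [e, e']; exact bool_trans2 h2 h3
        · have e : i + 1 + 2 = i + 3 := by omega
          have e' : i + 3 + 2 = i + 5 := by omega
          rw [e, e']; exact bool_trans2 h3 h4

end Aux
section Aux2

variable (x : ℕ → Bool)

lemma muI_even (y : ℕ → Bool) (n : ℕ) : muI y (2 * n) = y n := by
  have h1 : (2 * n) % 2 = 0 := by omega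
  have h2 : (2 * n) / 2 = n := by omega
  simp [muI, h1, h2]

lemma muI_odd (y : ℕ → Bool) (n : ℕ) : muI y (2 * n + 1) = !(y n) := by
  have h1 : (2 * n + 1) % 2 = 1 := by omega
  have h2 : (2 * n + 1) / 2 = n := by omega
  simp [muI, h1, h2]

/-- freeness transfers backwards along mu -/
lemma transfer_free (hx : Free73 x) (c : ℕ)
    (halt : ∀ n, x (c + 2 * n + 1) = !(x (c + 2 * n))) :
    Free73 (fun n => x (c + 2 * n)) := by
  rintro w ⟨i, hw⟩ ⟨p, hp, hper, hlen⟩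
  have hval : ∀ t (h : t < w.length), w.get ⟨t, h⟩ = x (c + 2 * (i + t)) := fun t h => hw t h
  have hvalD : ∀ t, t < w.length → w.getD t false = x (c + 2 * (i + t)) := by
    intro t h
    rw [List.getD_eq_getElem _ _ h]
    exact hval t h
  have hperiod : ∀ t, t + p < w.length → x (c + 2 * (i + t)) = x (c + 2 * (i + (t + p))) := by
    intro t h
    rw [← hvalD t (by omega), ← hvalD (t + p) h]
    exact hper t h
  refine no_pow x hx (c + 2 * i) (2 * p) (2 * w.length) (by omega) ?_ ?_
  · push_cast
    linarith
  · intro k hk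
    rcases Nat.even_or_odd k with ⟨t, ht⟩ | ⟨t, ht⟩
    · have e1 : c + 2 * i + k = c + 2 * (i + t) := by omega
      have e2 : c + 2 * i + k + 2 * p = c + 2 * (i + (t + p)) := by omega
      rw [e2, e1]
      exact hperiod t (by omega)
    · have e1 : c + 2 * i + k = c + 2 * (i + t) + 1 := by omega
      have e2 : c + 2 * i + k + 2 * p = c + 2 * (i + (t + p)) + 1 := by omega
      rw [e2, e1, halt, halt, hperiod t (by omega)]

/-- the factorization equality -/
lemma fact_eq (c : ℕ)
    (halt : ∀ n, x (c + 2 * n + 1) = !(x (c + 2 * n))) :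
    x = appendInf (win x 0 c) (muI (fun n => x (c + 2 * n))) := by
  funext n
  unfold appendInf
  by_cases h : n < (win x 0 c).length
  · rw [dif_pos h, win_get]
    simp
  · rw [dif_neg h]
    rw [win_length] at h ⊢
    rcases Nat.even_or_odd (n - c) with ⟨t, ht⟩ | ⟨t, ht⟩
    · have e : n - c = 2 * t := by omega
      rw [e, muI_even]
      have e2 : c + 2 * t = n := by omega
      rw [e2]
    · have e : n - c = 2 * t + 1 := by omega
      rw [e, muI_odd, ← halt]
      have e2 : c + 2 * t + 1 = n := by omega
      rw [e2]

end Aux2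
section Aux3

variable (x : ℕ → Bool)

private lemma P5_cases {p : List Bool} (hp : p ∈ P5) :
    p = [] ∨ p = [false] ∨ p = [false, false] ∨ p = [true] ∨ p = [true, true] := by
  simpa [P5, Set.mem_insert_iff] using hp

private lemma P5_len_le {p : List Bool} (hp : p ∈ P5) : p.length ≤ 2 := by
  rcases P5_cases hp with rfl | rfl | rfl | rfl | rfl <;> simp

private lemma P5_len2 {p : List Bool} (hp : p ∈ P5) (h2 : p.length = 2) :
    ∃ a, p = [a, a] := by
  rcases P5_cases hp with rfl | rfl | rfl | rfl | rfl
  · simp at h2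
  · simp at h2
  · exact ⟨false, rfl⟩
  · simp at h2
  · exact ⟨true, rfl⟩

lemma tail_eq (p : List Bool) (y : ℕ → Bool) (h : x = appendInf p (muI y)) (k : ℕ) :
    x (p.length + k) = muI y k := by
  rw [h]
  unfold appendInf
  rw [dif_neg (by omega)]
  congr 1
  omega

lemma pref_eq (p : List Bool) (z : ℕ → Bool) (h : x = appendInf p z) (i : ℕ)
    (hi : i < p.length) : x i = p.get ⟨i, hi⟩ := by
  rw [h]
  unfold appendInf
  rw [dif_pos hi]

lemma pair_ne (p : List Bool) (y : ℕ → Bool) (h : x = appendInf p (muI y)) (n : ℕ) :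
    x (p.length + 2 * n) ≠ x (p.length + 2 * n + 1) := by
  have e : p.length + 2 * n + 1 = p.length + (2 * n + 1) := by omega
  rw [tail_eq x p y h (2 * n), e, tail_eq x p y h (2 * n + 1), muI_even, muI_odd]
  cases y n <;> simp

lemma pair_ne' (p : List Bool) (y : ℕ → Bool) (h : x = appendInf p (muI y)) (j : ℕ)
    (hj : p.length ≤ j) (hpar : (j - p.length) % 2 = 0) : x j ≠ x (j + 1) := by
  have e : j = p.length + 2 * ((j - p.length) / 2) := by omega
  rw [e]
  exact pair_ne x p y h _

lemma uniq (hx : Free73 x) (p q : List Bool) (y z : ℕ → Bool)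
    (hp : p ∈ P5) (hq : q ∈ P5) (hyp : x = appendInf p (muI y))
    (hzq : x = appendInf q (muI z)) : p = q ∧ y = z := by
  have hlp := P5_len_le hp
  have hlq := P5_len_le hq
  -- lengths have equal parity
  have hpar : p.length % 2 = q.length % 2 := by
    by_contra hne
    have hall : ∀ j, 2 ≤ j → x j ≠ x (j + 1) := by
      intro j hj
      by_cases hjp : (j - p.length) % 2 = 0
      · exact pair_ne' x p y hyp j (by omega) hjp
      · exact pair_ne' x q z hzq j (by omega) (by omega)
    have h1 := hall 2 (by omega)
    have h2 := hall 3 (by omega)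
    have h3 := hall 4 (by omega)
    have h4 := hall 5 (by omega)
    refine no_pow x hx 2 2 5 (by norm_num) (by norm_num) ?_
    intro k hk
    have hub : k < 3 := by omega
    interval_cases k
    · exact bool_trans2 h1 h2
    · exact bool_trans2 h2 h3
    · exact bool_trans2 h3 h4
  -- lengths are equal
  have hlen : p.length = q.length := by
    by_contra hne
    have key : ∀ (p' q' : List Bool) (y' z' : ℕ → Bool), q' ∈ P5 →
        x = appendInf p' (muI y') → x = appendInf q' (muI z') →
        p'.length = 0 → q'.length = 2 → False := by
      intro p' q' y' z' hq5 h1 h2 hl0 hl2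
      have hne01 : x 0 ≠ x 1 := by
        have := pair_ne' x p' y' h1 0 (by omega) (by omega)
        simpa using this
      obtain ⟨a, rfl⟩ := P5_len2 hq5 hl2
      have e0 : x 0 = a := by simpa using pref_eq x _ (muI z') h2 0 (by simp)
      have e1 : x 1 = a := by simpa using pref_eq x _ (muI z') h2 1 (by simp)
      exact hne01 (e0.trans e1.symm)
    rcases Nat.lt_or_ge p.length q.length with hlt | hge
    · exact key p q y z hq hyp hzq (by omega) (by omega)
    · exact key q p z y hp hzq hyp (by omega) (by omega)
  -- hence p = q
  have hpq : p = q := by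
    apply List.ext_get hlen
    intro i h1 h2
    rw [← pref_eq x p (muI y) hyp i h1, ← pref_eq x q (muI z) hzq i h2]
  refine ⟨hpq, ?_⟩
  have hmu : ∀ k, muI y k = muI z k := by
    intro k
    rw [← tail_eq x p y hyp k, hpq, tail_eq x q z hzq k]
  funext n
  have h1 := hmu (2 * n)
  rwa [muI_even, muI_even] at h1

lemma key_exists (hx : Free73 x) :
    ∃ c, win x 0 c ∈ P5 ∧ ∀ n, x (c + 2 * n + 1) = !(x (c + 2 * n)) := by
  by_cases hA0 : ∀ n, x (2 * n) ≠ x (2 * n + 1)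
  · refine ⟨0, ?_, ?_⟩
    · have : win x 0 0 = [] := by simp [win]
      rw [this]; left; rfl
    · intro n
      have := bool_ne_iff (hA0 n)
      simpa using this
  · by_cases hA1 : ∀ n, x (2 * n + 1) ≠ x (2 * n + 1 + 1)
    · refine ⟨1, ?_, ?_⟩
      · have hw : win x 0 1 = [x 0] := by simp [win, List.range_succ]
        rw [hw]
        cases x 0
        · right; left; rfl
        · right; right; right; left; rfl
      · intro n
        have h := bool_ne_iff (hA1 n)
        have e : 1 + 2 * n = 2 * n + 1 := by omega
        rw [e]
        exact h
    · push_neg at hA0 hA1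
      obtain ⟨n0, h0⟩ := hA0
      obtain ⟨n1, h1⟩ := hA1
      have claim1 : ∀ m, 1 ≤ m → m % 2 = 0 → x m ≠ x (m + 1) := by
        intro m hm hpar hsame
        rcases Nat.lt_or_ge m (2 * n1 + 1) with hlt | hge
        · exact parity_lemma x hx (2 * n1 + 1 - m) m (2 * n1 + 1) hm hlt (by omega)
            (by omega) hsame h1
        · have hlt2 : 2 * n1 + 1 < m := by omega
          exact parity_lemma x hx (m - (2 * n1 + 1)) (2 * n1 + 1) m (by omega) hlt2
            (by omega) (by omega) h1 hsame
      have h00 : x 0 = x 1 := by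
        rcases Nat.eq_zero_or_pos n0 with rfl | hpos
        · simpa using h0
        · exact absurd h0 (claim1 (2 * n0) (by omega) (by omega))
      refine ⟨2, ?_, ?_⟩
      · have hw : win x 0 2 = [x 0, x 1] := by simp [win, List.range_succ]
        rw [hw, ← h00]
        cases x 0
        · right; right; left; rfl
        · right; right; right; right; rfl
      · intro n
        exact bool_ne_iff (claim1 (2 + 2 * n) (by omega) (by omega))

end Aux3
theorem stmt4 (x : ℕ → Bool) (hx : Free73 x) :
    ∃! py : List Bool × (ℕ → Bool),
      py.1 ∈ P5 ∧ Free73 py.2 ∧ x = appendInf py.1 (muI py.2) := by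
  obtain ⟨c, hc5, halt⟩ := key_exists x hx
  refine ⟨(win x 0 c, fun n => x (c + 2 * n)),
    ⟨hc5, transfer_free x hx c halt, fact_eq x c halt⟩, ?_⟩
  rintro ⟨q, z⟩ ⟨hq5, -, hqeq⟩
  obtain ⟨h1, h2⟩ := uniq x hx q (win x 0 c) z (fun n => x (c + 2 * n)) hq5 hc5 hqeq
    (fact_eq x c halt)
  exact Prod.ext h1 h2
end

section
/- For every right-infinite binary word x, the word 0010110·μ³(x) = 0μ(0μ(0μ(x))) is 7/3-power-free if and only if 001·μ²(x) = 0μ(0μ(x)) is 7/3-power-free. -/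
/-! ### Auxiliary machinery -/

/-- An occurrence in an infinite word of a `p`-periodic stretch of length `l` at position `i`. -/
def Occ (x : ℕ → Bool) (i p l : ℕ) : Prop := ∀ k, k + p < l → x (i + k) = x (i + k + p)

lemma muI_two_mul (Y : ℕ → Bool) (n : ℕ) : muI Y (2 * n) = Y n := by
  have h1 : (2 * n) % 2 = 0 := by omega
  have h2 : (2 * n) / 2 = n := by omega
  simp [muI, h1, h2]

lemma muI_two_mul_add_one (Y : ℕ → Bool) (n : ℕ) : muI Y (2 * n + 1) = !Y n := by
  have h1 : (2 * n + 1) % 2 = 1 := by omega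
  have h2 : (2 * n + 1) / 2 = n := by omega
  simp [muI, h1, h2]

lemma muI_zero (Y : ℕ → Bool) : muI Y 0 = Y 0 := by simp [muI]

lemma muI_one (Y : ℕ → Bool) : muI Y 1 = !Y 0 := by simp [muI]

lemma appendInf_nil (x : ℕ → Bool) (n : ℕ) : appendInf [] x n = x n := by
  simp [appendInf]

lemma appendInf_cons_zero (a : Bool) (w : List Bool) (x : ℕ → Bool) :
    appendInf (a :: w) x 0 = a := by
  simp [appendInf]

lemma appendInf_cons_succ (a : Bool) (w : List Bool) (x : ℕ → Bool) (n : ℕ) :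
    appendInf (a :: w) x (n + 1) = appendInf w x n := by
  have hlen : (a :: w).length = w.length + 1 := rfl
  by_cases h : n < w.length
  · have h' : n + 1 < (a :: w).length := by omega
    simp [appendInf, h, h']
  · have h' : ¬ n + 1 < (a :: w).length := by omega
    simp only [appendInf, dif_neg h, dif_neg h']
    congr 1
    omega

lemma appendInf_cons_one (a b : Bool) (w : List Bool) (x : ℕ → Bool) :
    appendInf (a :: b :: w) x 1 = b := by
  rw [show (1 : ℕ) = 0 + 1 from rfl, appendInf_cons_succ, appendInf_cons_zero]

lemma appendInf_append (u v : List Bool) (x : ℕ → Bool) (n : ℕ) :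
    appendInf (u ++ v) x n = appendInf u (appendInf v x) n := by
  induction u generalizing n with
  | nil => simp [appendInf_nil]
  | cons a u ih =>
    cases n with
    | zero => simp [List.cons_append, appendInf_cons_zero]
    | succ n => rw [List.cons_append, appendInf_cons_succ, appendInf_cons_succ, ih]

lemma mu_cons (a : Bool) (w : List Bool) : mu (a :: w) = a :: (!a) :: mu w := rfl

lemma muI_appendInf (w : List Bool) (x : ℕ → Bool) (n : ℕ) :
    muI (appendInf w x) n = appendInf (mu w) (muI x) n := by
  induction w generalizing n with
  | nil =>
    have h : appendInf [] x = x := funext (appendInf_nil x)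
    rw [h]
    show muI x n = appendInf [] (muI x) n
    rw [appendInf_nil]
  | cons a w ih =>
    rcases n with _ | n
    · rw [muI_zero, mu_cons, appendInf_cons_zero, appendInf_cons_zero]
    rcases n with _ | n
    · show muI (appendInf (a :: w) x) 1 = appendInf (mu (a :: w)) (muI x) 1
      rw [muI_one, mu_cons, appendInf_cons_zero, appendInf_cons_one]
    · show muI (appendInf (a :: w) x) (n + 2) = appendInf (mu (a :: w)) (muI x) (n + 2)
      have hL : muI (appendInf (a :: w) x) (n + 2) = muI (appendInf w x) n := by
        unfold muI
        have hm : (n + 2) % 2 = n % 2 := by omega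
        have hd : (n + 2) / 2 = n / 2 + 1 := by omega
        rw [hm, hd, appendInf_cons_succ]
      rw [hL, ih, mu_cons, show n + 2 = (n + 1) + 1 from rfl, appendInf_cons_succ,
        appendInf_cons_succ]

/-- From a violation of 7/3-freeness, extract an `Occ`. -/
lemma occ_of_not_free {x : ℕ → Bool} (h : ¬ Free73 x) :
    ∃ i p l, 1 ≤ p ∧ 7 * p ≤ 3 * l ∧ Occ x i p l := by
  unfold Free73 FreeI at h
  push_neg at h
  obtain ⟨w, ⟨i, hfac⟩, p, hp, hper, hlen⟩ := h
  refine ⟨i, p, w.length, hp, ?_, ?_⟩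
  · have hcast : (7 : ℚ) * p ≤ 3 * w.length := by
      have h' : (7 / 3 : ℚ) * p ≤ (w.length : ℚ) := hlen
      linarith
    exact_mod_cast hcast
  · intro k hk
    have h1 := hfac k (by omega)
    have h2 := hfac (k + p) hk
    have h3 := hper k hk
    rw [List.getD_eq_getElem _ _ (by omega), List.getD_eq_getElem _ _ hk] at h3
    rw [List.get_eq_getElem] at h1 h2
    rw [← Nat.add_assoc] at h2
    rw [← h1, ← h2]
    exact h3

/-- From an `Occ` with exponent at least 7/3, derive a contradiction with freeness. -/
lemma free_contra {x : ℕ → Bool} (hF : Free73 x) {i p l : ℕ}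
    (hp : 1 ≤ p) (hocc : Occ x i p l) (hl : 7 * p ≤ 3 * l) : False := by
  have hF' : ∀ w, IsFactor x w → ¬ HasExpGE w (7/3) := hF
  apply hF' (List.ofFn fun k : Fin l => x (i + k))
  · refine ⟨i, fun k hk => ?_⟩
    rw [List.get_eq_getElem, List.getElem_ofFn]
  · refine ⟨p, hp, ?_, ?_⟩
    · intro j hj
      rw [List.length_ofFn] at hj
      rw [List.getD_eq_getElem _ _ (by simpa using by omega),
        List.getD_eq_getElem _ _ (by simpa using hj)]
      simp only [List.getElem_ofFn]
      have := hocc j hj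
      rw [← Nat.add_assoc]
      exact this
    · rw [List.length_ofFn]
      have hcast : (7 : ℚ) * p ≤ 3 * l := by exact_mod_cast hl
      have : (7 / 3 : ℚ) * p ≤ (l : ℚ) := by linarith
      exact this

lemma occ_mu {x : ℕ → Bool} {i p l : ℕ} (h : Occ x i p l) :
    Occ (muI x) (2 * i) (2 * p) (2 * l) := by
  intro k hk
  have hx : x (i + k / 2) = x (i + k / 2 + p) := h (k / 2) (by omega)
  by_cases hpar : k % 2 = 0
  · have e1 : 2 * i + k = 2 * (i + k / 2) := by omega
    have e2 : 2 * i + k + 2 * p = 2 * (i + k / 2 + p) := by omega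
    rw [e2, e1, muI_two_mul, muI_two_mul]
    exact hx
  · have e1 : 2 * i + k = 2 * (i + k / 2) + 1 := by omega
    have e2 : 2 * i + k + 2 * p = 2 * (i + k / 2 + p) + 1 := by omega
    rw [e2, e1, muI_two_mul_add_one, muI_two_mul_add_one, hx]

/-- No factor of a `μ`-image has an odd period `p` with length at least `2p+1`. -/
lemma no_odd (Y : ℕ → Bool) (i p l : ℕ) (hp : p % 2 = 1) (hl : 2 * p + 1 ≤ l)
    (hocc : Occ (muI Y) i p l) : False := by
  have hblock : ∀ j, (i + j) % 2 = 0 → muI Y (i + j) ≠ muI Y (i + j + 1) := by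
    intro j hj
    have e1 : i + j = 2 * ((i + j) / 2) := by omega
    have e2 : i + j + 1 = 2 * ((i + j) / 2) + 1 := by omega
    rw [e2, e1, muI_two_mul, muI_two_mul_add_one]
    cases hb : Y ((i + j) / 2) <;> simp [hb]
  have hstep : ∀ j, j + p + 1 < l → muI Y (i + j) ≠ muI Y (i + j + 1) := by
    intro j hj
    by_cases hpar : (i + j) % 2 = 0
    · exact hblock j hpar
    · have h1 : muI Y (i + j) = muI Y (i + j + p) := hocc j (by omega)
      have h2 : muI Y (i + (j + 1)) = muI Y (i + (j + 1) + p) := hocc (j + 1) (by omega)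
      have hb := hblock (j + p) (by omega)
      rw [show i + (j + p) = i + j + p from by omega,
        show i + j + p + 1 = i + (j + 1) + p from by omega] at hb
      rw [show i + j + 1 = i + (j + 1) from by omega, h2, h1]
      exact hb
  have halt : ∀ j, j + p + 1 ≤ l →
      muI Y (i + j) = (if j % 2 = 0 then muI Y i else !(muI Y i)) := by
    intro j
    induction j with
    | zero => intro _; simp
    | succ j ih =>
      intro hj
      have hne := hstep j (by omega)
      have hprev := ih (by omega)
      have hflip : muI Y (i + (j + 1)) = !(muI Y (i + j)) := by
        rw [show i + (j + 1) = i + j + 1 from by omega]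
        cases hb1 : muI Y (i + j) <;> cases hb2 : muI Y (i + j + 1)
        · exact absurd (hb1.trans hb2.symm) hne
        · simp [hb1, hb2]
        · simp [hb1, hb2]
        · exact absurd (hb1.trans hb2.symm) hne
      rw [hflip, hprev]
      by_cases hpar : j % 2 = 0
      · rw [if_pos hpar, if_neg (by omega)]
      · rw [if_neg hpar, if_pos (by omega), Bool.not_not]
  have h0 : muI Y (i + 0) = muI Y (i + 0 + p) := hocc 0 (by omega)
  have hp' := halt p (by omega)
  rw [if_neg (by omega)] at hp'
  simp only [Nat.add_zero] at h0
  rw [hp'] at h0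
  cases hb : muI Y i <;> simp [hb] at h0

/-- Desubstitution: an even-period occurrence in `μ(Y)` pulls back to `Y`. -/
lemma desub (Y : ℕ → Bool) (i p l : ℕ) (hp : 1 ≤ p) (hl : 2 * p < l)
    (hocc : Occ (muI Y) i (2 * p) l) :
    Occ Y (i / 2) p ((i + l + 1) / 2 - i / 2) := by
  intro k hk
  by_cases hcase : i % 2 = 1 ∧ k = 0
  · obtain ⟨hodd, rfl⟩ := hcase
    have e1 : muI Y (2 * (i / 2) + 1) = !Y (i / 2) := muI_two_mul_add_one Y (i / 2)
    have e2 : muI Y (2 * (i / 2 + p) + 1) = !Y (i / 2 + p) := muI_two_mul_add_one Y (i / 2 + p)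
    have h1 : 2 * (i / 2) + 1 = i := by omega
    have h2 : 2 * (i / 2 + p) + 1 = i + 2 * p := by omega
    have h3 : muI Y (i + 0) = muI Y (i + 0 + 2 * p) := hocc 0 (by omega)
    rw [h1] at e1
    rw [h2] at e2
    simp only [Nat.add_zero] at h3
    rw [h3, e2] at e1
    have hY : Y (i / 2) = Y (i / 2 + p) := by
      revert e1
      cases hb1 : Y (i / 2) <;> cases hb2 : Y (i / 2 + p) <;> simp_all
    simpa using hY
  · have hge : i ≤ 2 * (i / 2 + k) := by
      rcases not_and_or.mp hcase with h | h <;> omega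
    have e1 : muI Y (2 * (i / 2 + k)) = Y (i / 2 + k) := muI_two_mul Y _
    have e2 : muI Y (2 * (i / 2 + k + p)) = Y (i / 2 + k + p) := muI_two_mul Y _
    have hj : 2 * (i / 2 + k) = i + (2 * (i / 2 + k) - i) := by omega
    have hocc' := hocc (2 * (i / 2 + k) - i) (by omega)
    have he : i + (2 * (i / 2 + k) - i) + 2 * p = 2 * (i / 2 + k + p) := by omega
    rw [← e1, ← e2, hj, hocc', he]

theorem stmt13 (x : ℕ → Bool) :
    Free73 (appendInf [false, false, true, false, true, true, false] (muI (muI (muI x)))) ↔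
    Free73 (appendInf [false, false, true] (muI (muI x))) := by
  have muI_appendInf' : ∀ (w : List Bool) (z : ℕ → Bool),
      muI (appendInf w z) = appendInf (mu w) (muI z) := fun w z => funext (muI_appendInf w z)
  have appendInf_append' : ∀ (u v : List Bool) (z : ℕ → Bool),
      appendInf (u ++ v) z = appendInf u (appendInf v z) :=
    fun u v z => funext (appendInf_append u v z)
  set y' := appendInf [false, false, true] (muI (muI x)) with hy'
  set L := appendInf [false, false, true, false, true, true, false] (muI (muI (muI x))) with hLdef0
  have hL1 : L = appendInf [false] (muI y') := by
    rw [hLdef0, hy', muI_appendInf',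
      show mu [false, false, true] = [false, true, false, true, true, false] from rfl,
      ← appendInf_append']
    rfl
  have hTy : muI (appendInf [true] y') = appendInf [true] L := by
    rw [muI_appendInf', show mu [true] = [true, false] from rfl,
      show ([true, false] : List Bool) = [true] ++ [false] from rfl, appendInf_append', hL1]
  have hTu : muI (appendInf [true, false] (muI x)) = appendInf [true] y' := by
    rw [muI_appendInf', show mu [true, false] = [true, false, false, true] from rfl,
      show ([true, false, false, true] : List Bool) = [true] ++ [false, false, true] from rfl,
      appendInf_append', hy']
  have hTx : muI (appendInf [true] x) = appendInf [true, false] (muI x) := by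
    rw [muI_appendInf']; rfl
  have hFin : muI (muI (appendInf [true] x)) = appendInf [true] y' := by rw [hTx, hTu]
  constructor
  · -- easy direction: Free73 L → Free73 y'
    intro hL
    by_contra hnot
    obtain ⟨i, p, l, hp, hlen, hocc⟩ := occ_of_not_free hnot
    have h2 := occ_mu hocc
    have hoccL : Occ L (2 * i + 1) (2 * p) (2 * l) := by
      intro k hk
      rw [hL1, show 2 * i + 1 + k + 2 * p = (2 * i + k + 2 * p) + 1 from by omega,
        show 2 * i + 1 + k = (2 * i + k) + 1 from by omega,
        appendInf_cons_succ, appendInf_cons_succ]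
      exact h2 k hk
    exact free_contra hL (by omega) hoccL (by omega)
  · -- hard direction: Free73 y' → Free73 L
    intro hR
    by_contra hnot
    obtain ⟨i0, p, l, hp, hlen, hoccL⟩ := occ_of_not_free hnot
    have hoccTy : Occ (muI (appendInf [true] y')) (i0 + 1) p l := by
      intro k hk
      rw [hTy, show i0 + 1 + k + p = (i0 + k + p) + 1 from by omega,
        show i0 + 1 + k = (i0 + k) + 1 from by omega,
        appendInf_cons_succ, appendInf_cons_succ]
      exact hoccL k hk
    by_cases hpar : p % 2 = 1
    · exact no_odd _ (i0 + 1) p l hpar (by omega) hoccTy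
    · obtain ⟨q, rfl⟩ : ∃ q, p = 2 * q := ⟨p / 2, by omega⟩
      have hq1 : 1 ≤ q := by omega
      have hd1 := desub _ (i0 + 1) q l hq1 (by omega) hoccTy
      by_cases hs1 : 1 ≤ (i0 + 1) / 2
      · have hoccy : Occ y' ((i0 + 1) / 2 - 1) q ((i0 + 1 + l + 1) / 2 - (i0 + 1) / 2) := by
          intro k hk
          have h := hd1 k hk
          rw [show (i0 + 1) / 2 + k + q = ((i0 + 1) / 2 - 1 + k + q) + 1 from by omega,
            show (i0 + 1) / 2 + k = ((i0 + 1) / 2 - 1 + k) + 1 from by omega,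
            appendInf_cons_succ, appendInf_cons_succ] at h
          exact h
        exact free_contra hR hq1 hoccy (by omega)
      · have hi0 : i0 = 0 := by omega
        subst hi0
        have hoccTu : Occ (muI (appendInf [true, false] (muI x))) 0 q
            ((0 + 1 + l + 1) / 2 - (0 + 1) / 2) := by
          rw [show (0:ℕ) + 1 = (0:ℕ) + 1 from rfl, hTu]
          exact hd1
        set m := (0 + 1 + l + 1) / 2 - (0 + 1) / 2 with hmdef
        have hm1 : 7 * q + 2 ≤ 3 * m := by omega
        by_cases hpar2 : q % 2 = 1
        · exact no_odd _ 0 q m hpar2 (by omega) hoccTu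
        · obtain ⟨q', rfl⟩ : ∃ q', q = 2 * q' := ⟨q / 2, by omega⟩
          have hq'1 : 1 ≤ q' := by omega
          have hd2 := desub _ 0 q' m hq'1 (by omega) hoccTu
          have hoccTx : Occ (muI (appendInf [true] x)) 0 q' ((0 + m + 1) / 2 - 0 / 2) := by
            rw [hTx]; exact hd2
          set m' := (0 + m + 1) / 2 - 0 / 2 with hm'def
          have hm'1 : 7 * q' + 1 ≤ 3 * m' := by omega
          by_cases hpar3 : q' % 2 = 1
          · exact no_odd _ 0 q' m' hpar3 (by omega) hoccTx
          · obtain ⟨q'', rfl⟩ : ∃ q'', q' = 2 * q'' := ⟨q' / 2, by omega⟩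
            have hq''1 : 1 ≤ q'' := by omega
            have hd3 := desub _ 0 q'' m' hq''1 (by omega) hoccTx
            set m'' := (0 + m' + 1) / 2 - 0 / 2 with hm''def
            have hm''1 : 7 * q'' + 1 ≤ 3 * m'' := by omega
            have hmu2 := occ_mu (occ_mu hd3)
            have e0 : ∀ n, y' n = muI (muI (appendInf [true] x)) (n + 1) := by
              intro n; rw [hFin, appendInf_cons_succ, appendInf_nil]
            have hoccy : Occ y' 0 (4 * q'') (4 * m'' - 1) := by
              intro k hk
              rw [e0, e0]
              have h := hmu2 (k + 1) (by omega)
              have e2 : 2 * (2 * (0 / 2)) + (k + 1) + 2 * (2 * q'') = 0 + k + 4 * q'' + 1 := by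
                omega
              have e1 : 2 * (2 * (0 / 2)) + (k + 1) = 0 + k + 1 := by omega
              rw [e2, e1] at h
              exact h
            exact free_contra hR (by omega) hoccy (by omega)
end
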